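/- Let δ̲ < 1 and let D, D' ∈ ℝ^{m×p} satisfy max(δ̲_k(D), δ̲_k(D')) ≤ δ̲. Then for every index set J of size k: (i) |||I − D_J⁺ D'_J|||₂ ≤ (1−δ̲)^{-1/2}·‖D − D'‖_F; (ii) |||Θ_J(D') − Θ_J(D)|||₂ ≤ 2(1−δ̲)^{-3/2}·‖D − D'‖_F; (iii) |||(D'_J)⁺ − D_J⁺|||₂ ≤ 2(1−δ̲)^{-1}·‖D − D'‖_F; (iv) |||P_J(D') − P_J(D)|||₂ ≤ 2(1−δ̲)^{-1/2}·‖D − D'‖_F. -/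

import Mathlib

open MeasureTheory Matrix Finset
open scoped ENNReal NNReal

noncomputable section

/-- squared ℓ² norm of a vector -/
def l2sq {n : Type*} [Fintype n] (v : n → ℝ) : ℝ := ∑ i, v i ^ 2

/-- ℓ² norm of a vector -/
def l2 {n : Type*} [Fintype n] (v : n → ℝ) : ℝ := Real.sqrt (l2sq v)

/-- ℓ¹ norm of a vector -/
def l1 {n : Type*} [Fintype n] (v : n → ℝ) : ℝ := ∑ i, |v i|

/-- ℓ^∞ (sup) norm of a vector -/
def linf {n : Type*} (v : n → ℝ) : ℝ := sSup (Set.range fun i => |v i|)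

/-- squared Frobenius norm -/
def frobSq {n q : Type*} [Fintype n] [Fintype q] (A : Matrix n q ℝ) : ℝ :=
  ∑ i, ∑ j, A i j ^ 2

/-- Frobenius norm -/
def frob {n q : Type*} [Fintype n] [Fintype q] (A : Matrix n q ℝ) : ℝ :=
  Real.sqrt (frobSq A)

/-- spectral (operator ℓ²→ℓ²) norm -/
def spec {n q : Type*} [Fintype n] [Fintype q] (A : Matrix n q ℝ) : ℝ :=
  sSup {t : ℝ | ∃ x : q → ℝ, l2 x ≤ 1 ∧ t = l2 (A.mulVec x)}

/-- operator ℓ∞→ℓ∞ norm: max row sum of absolute values -/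
def opInf {n q : Type*} [Fintype q] (A : Matrix n q ℝ) : ℝ :=
  sSup (Set.range fun i => ∑ j, |A i j|)

/-- j-th column of a matrix -/
def col {m p : ℕ} (D : Matrix (Fin m) (Fin p) ℝ) (j : Fin p) : Fin m → ℝ :=
  fun i => D i j

/-- the oblique manifold: matrices with unit ℓ²-norm columns -/
def Oblique {m p : ℕ} (D : Matrix (Fin m) (Fin p) ℝ) : Prop :=
  ∀ j, l2sq (_root_.col D j) = 1

/-- cumulative coherence μ_k -/
def mu {m p : ℕ} (k : ℕ) (D : Matrix (Fin m) (Fin p) ℝ) : ℝ :=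
  sSup {t : ℝ | ∃ J : Finset (Fin p), J.card ≤ k ∧ ∃ j, j ∉ J ∧
    t = ∑ i ∈ J, |∑ r, D r i * D r j|}

/-- lower restricted isometry constant δ̲_k -/
def deltaLow {m p : ℕ} (k : ℕ) (D : Matrix (Fin m) (Fin p) ℝ) : ℝ :=
  sInf {δ : ℝ | 0 ≤ δ ∧ ∀ J : Finset (Fin p), J.card = k →
    ∀ z : Fin p → ℝ, (∀ i, i ∉ J → z i = 0) →
      (1 - δ) * l2sq z ≤ l2sq (D.mulVec z)}

/-- upper restricted isometry constant δ̄_k -/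
def deltaUp {m p : ℕ} (k : ℕ) (D : Matrix (Fin m) (Fin p) ℝ) : ℝ :=
  sInf {δ : ℝ | 0 ≤ δ ∧ ∀ J : Finset (Fin p), J.card = k →
    ∀ z : Fin p → ℝ, (∀ i, i ∉ J → z i = 0) →
      l2sq (D.mulVec z) ≤ (1 + δ) * l2sq z}

/-- submatrix D_J of the columns indexed by J -/
def colsub {m p : ℕ} (D : Matrix (Fin m) (Fin p) ℝ) (J : Finset (Fin p)) :
    Matrix (Fin m) J ℝ := fun i j => D i j.1

/-- Gram matrix D_Jᵀ D_J -/
def gram {m p : ℕ} (D : Matrix (Fin m) (Fin p) ℝ) (J : Finset (Fin p)) :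
    Matrix J J ℝ := (colsub D J)ᵀ * colsub D J

/-- Θ_J(D) = (D_Jᵀ D_J)⁻¹ -/
def theta {m p : ℕ} (D : Matrix (Fin m) (Fin p) ℝ) (J : Finset (Fin p)) :
    Matrix J J ℝ := (gram D J)⁻¹

/-- pseudo-inverse D_J⁺ = Θ_J D_Jᵀ -/
def pinv {m p : ℕ} (D : Matrix (Fin m) (Fin p) ℝ) (J : Finset (Fin p)) :
    Matrix J (Fin m) ℝ := theta D J * (colsub D J)ᵀ

/-- orthogonal projector P_J(D) = D_J Θ_J D_Jᵀ -/
def proj {m p : ℕ} (D : Matrix (Fin m) (Fin p) ℝ) (J : Finset (Fin p)) :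
    Matrix (Fin m) (Fin m) ℝ := colsub D J * pinv D J

/-- Lasso objective L_x(D, α) -/
def lasso {m p : ℕ} (lam : ℝ) (x : Fin m → ℝ) (D : Matrix (Fin m) (Fin p) ℝ)
    (a : Fin p → ℝ) : ℝ :=
  (1/2) * l2sq (fun i => x i - D.mulVec a i) + lam * l1 a

/-- f_x(D) = inf_α L_x(D, α) -/
def fobj {m p : ℕ} (lam : ℝ) (x : Fin m → ℝ) (D : Matrix (Fin m) (Fin p) ℝ) : ℝ :=
  ⨅ a : Fin p → ℝ, lasso lam x D a

/-- φ_x(D|s) for a sign vector s with support J -/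
def phi {m p : ℕ} (lam : ℝ) (x : Fin m → ℝ) (D : Matrix (Fin m) (Fin p) ℝ)
    (J : Finset (Fin p)) (s : Fin p → ℝ) : ℝ :=
  (1/2) * (l2sq x - ∑ a : J, ∑ b : J,
    ((colsub D J)ᵀ.mulVec x a - lam * s a.1) * theta D J a b
      * ((colsub D J)ᵀ.mulVec x b - lam * s b.1))

/-- α̂_x(D|s): the closed-form candidate minimizer with sign pattern s and support J -/
def alphaHat {m p : ℕ} (lam : ℝ) (x : Fin m → ℝ) (D : Matrix (Fin m) (Fin p) ℝ)
    (J : Finset (Fin p)) (s : Fin p → ℝ) : Fin p → ℝ :=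
  fun i => if h : i ∈ J then
    (pinv D J).mulVec x ⟨i, h⟩ - lam * (theta D J).mulVec (fun a => s a.1) ⟨i, h⟩
  else 0

/-- sign vector of a coefficient vector -/
def sgnv {p : ℕ} (a : Fin p → ℝ) : Fin p → ℝ := fun i => Real.sign (a i)

/-- the noisy signal x = D° α° + ε -/
def xsig {m p : ℕ} (Do : Matrix (Fin m) (Fin p) ℝ) (a : Fin p → ℝ) (e : Fin m → ℝ) :
    Fin m → ℝ := fun i => Do.mulVec a i + e i

/-- average over all subsets J ⊆ {1,…,p} of size k -/
def EJ {p : ℕ} (k : ℕ) (f : Finset (Fin p) → ℝ) : ℝ :=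
  ((p.choose k : ℝ))⁻¹ * ∑ S ∈ Finset.powersetCard k (Finset.univ : Finset (Fin p)), f S

/-- the constant C_min -/
def CminV {m p : ℕ} (k : ℕ) (Do : Matrix (Fin m) (Fin p) ℝ) (Ea2 Ea1 : ℝ) : ℝ :=
  24 * (Ea1 / Real.sqrt Ea2) ^ 2 * (spec Do + 1) * ((k : ℝ) / (p : ℝ)) *
    frob (Doᵀ * Do - (1 : Matrix (Fin p) (Fin p) ℝ))

/-- the constant C_max -/
def CmaxV {m p : ℕ} (k : ℕ) (Do : Matrix (Fin m) (Fin p) ℝ) (Ea1 Malpha : ℝ) : ℝ :=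
  (2/7) * (Ea1 / Malpha) * (1 - 2 * mu k Do)

/-- The Basic signal model (Assumption 1 together with the generative mechanism):
J is uniform over size-k supports, α° is supported on J with white coefficients and signs,
and the noise is decorrelated from the coefficients and white.  Conditional expectations given
J are expressed as integrals over the events {J = S}. -/
structure IsBasicModel {m p : ℕ} (k : ℕ) {Ω : Type*} [MeasurableSpace Ω] (μ : Measure Ω)
    (Jv : Ω → Finset (Fin p)) (av : Ω → Fin p → ℝ) (ev : Ω → Fin m → ℝ)
    (Ea2 Ea1 Ee2 : ℝ) : Prop where
  prob : IsProbabilityMeasure μ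
  measJ : ∀ S : Finset (Fin p), MeasurableSet {ω | Jv ω = S}
  measa : ∀ i, Measurable fun ω => av ω i
  mease : ∀ i, Measurable fun ω => ev ω i
  Ea2_pos : 0 < Ea2
  Ea1_pos : 0 < Ea1
  unif : ∀ S : Finset (Fin p), S.card = k →
    μ {ω | Jv ω = S} = ((p.choose k : ℝ≥0∞))⁻¹
  support : ∀ᵐ ω ∂μ, ∀ i, i ∉ Jv ω → av ω i = 0
  coeffWhite : ∀ S : Finset (Fin p), S.card = k → ∀ i ∈ S, ∀ j ∈ S,
    ∫ ω in {ω | Jv ω = S}, av ω i * av ω j ∂μ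
      = (if i = j then Ea2 else 0) * (μ {ω | Jv ω = S}).toReal
  signWhite : ∀ S : Finset (Fin p), S.card = k → ∀ i ∈ S, ∀ j ∈ S,
    ∫ ω in {ω | Jv ω = S}, Real.sign (av ω i) * Real.sign (av ω j) ∂μ
      = (if i = j then 1 else 0) * (μ {ω | Jv ω = S}).toReal
  coeffSign : ∀ S : Finset (Fin p), S.card = k → ∀ i ∈ S, ∀ j ∈ S,
    ∫ ω in {ω | Jv ω = S}, av ω i * Real.sign (av ω j) ∂μ
      = (if i = j then Ea1 else 0) * (μ {ω | Jv ω = S}).toReal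
  noiseCoeff : ∀ S : Finset (Fin p), S.card = k → ∀ i : Fin m, ∀ j ∈ S,
    ∫ ω in {ω | Jv ω = S}, ev ω i * av ω j ∂μ = 0
  noiseSign : ∀ S : Finset (Fin p), S.card = k → ∀ i : Fin m, ∀ j ∈ S,
    ∫ ω in {ω | Jv ω = S}, ev ω i * Real.sign (av ω j) ∂μ = 0
  noiseWhite : ∀ S : Finset (Fin p), S.card = k → ∀ i j : Fin m,
    ∫ ω in {ω | Jv ω = S}, ev ω i * ev ω j ∂μ
      = (if i = j then Ee2 else 0) * (μ {ω | Jv ω = S}).toReal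

/-- The Bounded signal model (Assumption 2): almost sure lower bound on nonzero coefficients,
and almost sure ℓ² bounds on the coefficient vector and the noise. -/
structure IsBoundedModel {m p : ℕ} {Ω : Type*} [MeasurableSpace Ω] (μ : Measure Ω)
    (Jv : Ω → Finset (Fin p)) (av : Ω → Fin p → ℝ) (ev : Ω → Fin m → ℝ)
    (alphaMin Malpha Meps : ℝ) : Prop where
  alphaMin_pos : 0 < alphaMin
  Malpha_pos : 0 < Malpha
  coeffFloor : ∀ᵐ ω ∂μ, ∀ i ∈ Jv ω, alphaMin ≤ |av ω i|
  coeffBound : ∀ᵐ ω ∂μ, l2 (av ω) ≤ Malpha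
  noiseBound : ∀ᵐ ω ∂μ, l2 (ev ω) ≤ Meps

end

/-!
Write `A = D_J`, `B = D'_J`, `Θ_A = (AᵀA)⁻¹` and `c = 1 - δ`. The restricted isometry bound
gives `c ‖x‖² ≤ ‖A x‖²`, hence `‖Θ_A‖ ≤ 1/c`; the C⋆-identity then gives
`‖A Θ_A‖ = ‖Θ_A Aᵀ‖ ≤ 1/√c` and `‖1 - A Θ_A Aᵀ‖ ≤ 1`, the latter matrix being an orthogonal
projection. Each of the four differences factors through `A - B`, for instance
`Θ_B - Θ_A = Θ_B (A - B)ᵀ A Θ_A + Θ_B Bᵀ (A - B) Θ_A`, so submultiplicativity of the operator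
norm and `‖A - B‖ ≤ ‖D - D'‖_F` give the four bounds.
-/

open scoped Matrix.Norms.L2Operator

section EuclideanNorm

variable {n q : Type*} [Fintype n] [Fintype q]

lemma l2sq_nonneg (v : n → ℝ) : 0 ≤ l2sq v := by
  unfold l2sq; positivity

lemma l2_nonneg (v : n → ℝ) : 0 ≤ l2 v := Real.sqrt_nonneg _

lemma l2_sq (v : n → ℝ) : l2 v ^ 2 = l2sq v := Real.sq_sqrt (l2sq_nonneg v)

lemma l2sq_eq_dotProduct (v : n → ℝ) : l2sq v = v ⬝ᵥ v := by
  simp only [l2sq, dotProduct, sq]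

lemma l2_eq_norm_toLp (v : n → ℝ) : l2 v = ‖WithLp.toLp 2 v‖ := by
  rw [EuclideanSpace.norm_eq]; simp [l2, l2sq]

lemma dotProduct_le_l2_mul_l2 (v w : n → ℝ) : v ⬝ᵥ w ≤ l2 v * l2 w :=
  Real.sum_mul_le_sqrt_mul_sqrt _ _ _

lemma l2sq_pos {v : n → ℝ} (hv : v ≠ 0) : 0 < l2sq v := by
  refine (l2sq_nonneg v).lt_of_ne' ?_
  rw [l2sq_eq_dotProduct]
  exact mt dotProduct_self_eq_zero.1 hv

lemma l2sq_mulVec_eq_dotProduct (A : Matrix n q ℝ) (x : q → ℝ) :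
    l2sq (A *ᵥ x) = x ⬝ᵥ (Aᵀ * A) *ᵥ x := by
  rw [l2sq_eq_dotProduct, ← mulVec_mulVec, dotProduct_mulVec x, vecMul_transpose]

lemma l2_mulVec_le_frob_mul (A : Matrix n q ℝ) (x : q → ℝ) :
    l2 (A *ᵥ x) ≤ frob A * l2 x := by
  have h : l2sq (A *ᵥ x) ≤ frobSq A * l2sq x := by
    unfold l2sq frobSq mulVec dotProduct
    rw [Finset.sum_mul]
    exact Finset.sum_le_sum fun i _ => Finset.sum_mul_sq_le_sq_mul_sq _ _ _
  rw [l2, l2, frob, ← Real.sqrt_mul (show 0 ≤ frobSq A by unfold frobSq; positivity)]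
  exact Real.sqrt_le_sqrt h

lemma sum_univ_eq_sum_coe_sort_of_eq_zero {ι M : Type*} [Fintype ι] [AddCommMonoid M]
    {s : Finset ι} {g : ι → M} (hg : ∀ i, i ∉ s → g i = 0) : ∑ i, g i = ∑ i : s, g i :=
  (Finset.sum_subset (Finset.subset_univ s) fun i _ hi => hg i hi).symm.trans
    (Finset.sum_coe_sort s g).symm

lemma frob_colsub_le {m p : ℕ} (M : Matrix (Fin m) (Fin p) ℝ) (J : Finset (Fin p)) :
    frob (colsub M J) ≤ frob M := by
  refine Real.sqrt_le_sqrt (Finset.sum_le_sum fun i _ => ?_)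
  change ∑ j : J, M i j ^ 2 ≤ _
  rw [Finset.sum_coe_sort J fun j => M i j ^ 2]
  exact Finset.sum_le_sum_of_subset_of_nonneg (Finset.subset_univ J) fun _ _ _ => sq_nonneg _

end EuclideanNorm

section OperatorNorm

variable {l n q : Type*} [Fintype l] [Fintype n] [Fintype q] [DecidableEq q]

lemma l2_opNorm_le_of_forall {A : Matrix n q ℝ} {C : ℝ} (hC : 0 ≤ C)
    (h : ∀ x, l2 (A *ᵥ x) ≤ C * l2 x) : ‖A‖ ≤ C := by
  rw [l2_opNorm_def]
  refine ContinuousLinearMap.opNorm_le_bound _ hC fun x => ?_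
  change ‖WithLp.toLp 2 (A *ᵥ x.ofLp)‖ ≤ C * ‖x‖
  simpa [l2_eq_norm_toLp] using h x.ofLp

lemma spec_eq_l2_opNorm (A : Matrix n q ℝ) : spec A = ‖A‖ := by
  rw [l2_opNorm_def, ← ContinuousLinearMap.sSup_unitClosedBall_eq_norm, spec]
  congr 1
  ext t
  constructor
  · rintro ⟨x, hx, rfl⟩
    exact ⟨WithLp.toLp 2 x, by simpa [l2_eq_norm_toLp] using hx, by simp [l2_eq_norm_toLp]⟩
  · rintro ⟨x, hx, rfl⟩
    exact ⟨x.ofLp, by simpa [l2_eq_norm_toLp] using hx, by simp [l2_eq_norm_toLp]; rfl⟩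

lemma l2_opNorm_le_frob (A : Matrix n q ℝ) : ‖A‖ ≤ frob A :=
  l2_opNorm_le_of_forall (Real.sqrt_nonneg _) (l2_mulVec_le_frob_mul A)

lemma l2_opNorm_transpose [DecidableEq n] (A : Matrix n q ℝ) : ‖Aᵀ‖ = ‖A‖ := by
  simpa using A.l2_opNorm_conjTranspose

lemma l2_opNorm_transpose_mul_self (A : Matrix n q ℝ) : ‖Aᵀ * A‖ = ‖A‖ * ‖A‖ := by
  simpa using A.l2_opNorm_conjTranspose_mul_self

lemma l2_opNorm_mul_mul_le {o : Type*} [Fintype o] [DecidableEq n] [DecidableEq o]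
    (X : Matrix l n ℝ) (Y : Matrix n o ℝ) (Z : Matrix o q ℝ) : ‖X * Y * Z‖ ≤ ‖X‖ * ‖Y‖ * ‖Z‖ :=
  (l2_opNorm_mul _ _).trans (by gcongr; exact l2_opNorm_mul _ _)

lemma l2_opNorm_le_one_of_transpose_mul_self_eq {Q : Matrix q q ℝ} (hQ : Qᵀ * Q = Q) :
    ‖Q‖ ≤ 1 := by
  have h := l2_opNorm_transpose_mul_self Q
  rw [hQ] at h
  nlinarith [norm_nonneg Q]

end OperatorNorm

section RestrictedIsometry

variable {m p k : ℕ} {D : Matrix (Fin m) (Fin p) ℝ} {J : Finset (Fin p)}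

lemma one_sub_deltaLow_mul_l2sq_le (hJ : J.card = k) {z : Fin p → ℝ}
    (hz : ∀ i, i ∉ J → z i = 0) : (1 - deltaLow k D) * l2sq z ≤ l2sq (D *ᵥ z) := by
  have hmem : deltaLow k D ∈ _ := IsClosed.csInf_mem ?closed ?nonempty ⟨0, fun _ h => h.1⟩
  · exact hmem.2 J hJ z hz
  case closed =>
    simp only [Set.ofPred_and, Set.ofPred_forall]
    exact (isClosed_le continuous_const continuous_id).inter <| isClosed_iInter fun J =>
      isClosed_iInter fun _ => isClosed_iInter fun z => isClosed_iInter fun _ =>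
        isClosed_le (by fun_prop) continuous_const
  case nonempty =>
    exact ⟨1, zero_le_one, fun _ _ z _ => by rw [sub_self, zero_mul]; exact l2sq_nonneg _⟩

lemma one_sub_mul_l2sq_le_l2sq_colsub_mulVec {δ : ℝ} (hD : deltaLow k D ≤ δ)
    (hJ : J.card = k) (y : J → ℝ) : (1 - δ) * l2sq y ≤ l2sq (colsub D J *ᵥ y) := by
  classical
  set z : Fin p → ℝ := fun i => if h : i ∈ J then y ⟨i, h⟩ else 0
  have hz : ∀ i, i ∉ J → z i = 0 := fun i hi => dif_neg hi
  have hz_sq : l2sq z = l2sq y := by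
    rw [l2sq, sum_univ_eq_sum_coe_sort_of_eq_zero fun i hi => by rw [hz i hi, sq, zero_mul]]
    exact Finset.sum_congr rfl fun j _ => by simp [z]
  have hz_mulVec : D *ᵥ z = colsub D J *ᵥ y := by
    ext i
    rw [mulVec, dotProduct,
      sum_univ_eq_sum_coe_sort_of_eq_zero fun j hj => by rw [hz j hj, mul_zero]]
    exact Finset.sum_congr rfl fun j _ => by simp [z, colsub]
  calc (1 - δ) * l2sq y ≤ (1 - deltaLow k D) * l2sq z := by
        rw [hz_sq]; gcongr; exact l2sq_nonneg y
    _ ≤ l2sq (colsub D J *ᵥ y) := hz_mulVec ▸ one_sub_deltaLow_mul_l2sq_le hJ hz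

end RestrictedIsometry

section Gram

variable {n q r : Type*} [Fintype n] [Fintype q] {c : ℝ} {A : Matrix n q ℝ}

lemma posDef_transpose_mul_self (hc : 0 < c) (hA : ∀ x, c * l2sq x ≤ l2sq (A *ᵥ x)) :
    (Aᵀ * A).PosDef := by
  rw [posDef_iff_dotProduct_mulVec]
  refine ⟨by simpa using isHermitian_conjTranspose_mul_self A, fun x hx => ?_⟩
  calc 0 < c * l2sq x := mul_pos hc (l2sq_pos hx)
    _ ≤ l2sq (A *ᵥ x) := hA x
    _ = star x ⬝ᵥ (Aᵀ * A) *ᵥ x := by rw [l2sq_mulVec_eq_dotProduct, star_trivial]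

variable [DecidableEq q]

lemma isUnit_det_transpose_mul_self (hc : 0 < c) (hA : ∀ x, c * l2sq x ≤ l2sq (A *ᵥ x)) :
    IsUnit (Aᵀ * A).det :=
  (isUnit_iff_isUnit_det _).1 (posDef_transpose_mul_self hc hA).isUnit

lemma transpose_inv_gram (A : Matrix n q ℝ) : (Aᵀ * A)⁻¹ᵀ = (Aᵀ * A)⁻¹ := by
  rw [transpose_nonsing_inv, transpose_mul, transpose_transpose]

lemma inv_gram_mul_cancel (hA : IsUnit (Aᵀ * A).det) (M : Matrix q r ℝ) :
    (Aᵀ * A)⁻¹ * (Aᵀ * (A * M)) = M := by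
  rw [← Matrix.mul_assoc Aᵀ, ← Matrix.mul_assoc, nonsing_inv_mul _ hA, Matrix.one_mul]

lemma transpose_mul_mul_inv_gram (hA : IsUnit (Aᵀ * A).det) :
    Aᵀ * (A * (Aᵀ * A)⁻¹) = 1 := by
  rw [← Matrix.mul_assoc, mul_nonsing_inv _ hA]

lemma transpose_mul_mul_inv_gram_mul (hA : IsUnit (Aᵀ * A).det) (M : Matrix q r ℝ) :
    Aᵀ * (A * ((Aᵀ * A)⁻¹ * M)) = M := by
  rw [← Matrix.mul_assoc A, ← Matrix.mul_assoc, transpose_mul_mul_inv_gram hA, Matrix.one_mul]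

lemma l2_opNorm_inv_gram_le (hc : 0 < c) (hA : ∀ x, c * l2sq x ≤ l2sq (A *ᵥ x)) :
    ‖(Aᵀ * A)⁻¹‖ ≤ c⁻¹ := by
  refine l2_opNorm_le_of_forall (inv_nonneg.2 hc.le) fun y => ?_
  set z := (Aᵀ * A)⁻¹ *ᵥ y
  have hz : c * l2 z ^ 2 ≤ l2 z * l2 y := calc
    c * l2 z ^ 2 ≤ l2sq (A *ᵥ z) := l2_sq z ▸ hA z
    _ = z ⬝ᵥ y := by
      rw [l2sq_mulVec_eq_dotProduct, mulVec_mulVec,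
        mul_nonsing_inv _ (isUnit_det_transpose_mul_self hc hA), one_mulVec]
    _ ≤ l2 z * l2 y := dotProduct_le_l2_mul_l2 z y
  rcases (l2_nonneg z).eq_or_lt with hz0 | hz0
  · rw [← hz0]; exact mul_nonneg (inv_nonneg.2 hc.le) (l2_nonneg y)
  · rw [inv_mul_eq_div, le_div_iff₀ hc]
    nlinarith

lemma l2_opNorm_mul_inv_gram_le (hc : 0 < c) (hA : ∀ x, c * l2sq x ≤ l2sq (A *ᵥ x)) :
    ‖A * (Aᵀ * A)⁻¹‖ ≤ (√c)⁻¹ := by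
  rw [← Real.sqrt_inv]
  refine Real.le_sqrt_of_sq_le ?_
  calc ‖A * (Aᵀ * A)⁻¹‖ ^ 2 = ‖(A * (Aᵀ * A)⁻¹)ᵀ * (A * (Aᵀ * A)⁻¹)‖ := by
        rw [l2_opNorm_transpose_mul_self, sq]
    _ = ‖(Aᵀ * A)⁻¹‖ := by
        rw [transpose_mul, transpose_inv_gram, Matrix.mul_assoc,
          transpose_mul_mul_inv_gram (isUnit_det_transpose_mul_self hc hA), Matrix.mul_one]
    _ ≤ c⁻¹ := l2_opNorm_inv_gram_le hc hA

lemma l2_opNorm_inv_gram_mul_transpose_le [DecidableEq n] (hc : 0 < c)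
    (hA : ∀ x, c * l2sq x ≤ l2sq (A *ᵥ x)) : ‖(Aᵀ * A)⁻¹ * Aᵀ‖ ≤ (√c)⁻¹ := by
  rw [← transpose_inv_gram, ← transpose_mul, l2_opNorm_transpose]
  exact l2_opNorm_mul_inv_gram_le hc hA

lemma l2_opNorm_one_sub_proj_le [DecidableEq n] (hA : IsUnit (Aᵀ * A).det) :
    ‖1 - A * ((Aᵀ * A)⁻¹ * Aᵀ)‖ ≤ 1 := by
  refine l2_opNorm_le_one_of_transpose_mul_self_eq ?_
  simp only [transpose_sub, transpose_one, transpose_mul, transpose_transpose, transpose_inv_gram,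
    Matrix.sub_mul, Matrix.mul_sub, Matrix.one_mul, Matrix.mul_one, Matrix.mul_assoc,
    transpose_mul_mul_inv_gram_mul hA]
  abel

end Gram

section Perturbation

variable {n q : Type*} [Fintype n] [Fintype q] [DecidableEq n] [DecidableEq q] {c : ℝ}
  {A B : Matrix n q ℝ}

theorem l2_opNorm_one_sub_pinv_mul_le (hc : 0 < c) (hA : ∀ x, c * l2sq x ≤ l2sq (A *ᵥ x)) :
    ‖1 - (Aᵀ * A)⁻¹ * Aᵀ * B‖ ≤ ‖A - B‖ / √c := by
  have hGA := isUnit_det_transpose_mul_self hc hA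
  have key : 1 - (Aᵀ * A)⁻¹ * Aᵀ * B = (Aᵀ * A)⁻¹ * Aᵀ * (A - B) := by
    rw [Matrix.mul_sub, Matrix.mul_assoc _ Aᵀ A, nonsing_inv_mul _ hGA]
  rw [key, div_eq_inv_mul]
  exact (l2_opNorm_mul _ _).trans (by gcongr; exact l2_opNorm_inv_gram_mul_transpose_le hc hA)

theorem l2_opNorm_inv_gram_sub_le (hc : 0 < c) (hA : ∀ x, c * l2sq x ≤ l2sq (A *ᵥ x))
    (hB : ∀ x, c * l2sq x ≤ l2sq (B *ᵥ x)) :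
    ‖(Bᵀ * B)⁻¹ - (Aᵀ * A)⁻¹‖ ≤ 2 * ‖A - B‖ / (c * √c) := by
  have hGA := isUnit_det_transpose_mul_self hc hA
  have hGB := isUnit_det_transpose_mul_self hc hB
  have key : (Bᵀ * B)⁻¹ - (Aᵀ * A)⁻¹ = (Bᵀ * B)⁻¹ * (A - B)ᵀ * (A * (Aᵀ * A)⁻¹)
      + (Bᵀ * B)⁻¹ * Bᵀ * (A - B) * (Aᵀ * A)⁻¹ := by
    simp only [transpose_sub, Matrix.sub_mul, Matrix.mul_sub, Matrix.mul_assoc, Matrix.mul_one,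
      transpose_mul_mul_inv_gram hGA, inv_gram_mul_cancel hGB]
    abel
  calc ‖(Bᵀ * B)⁻¹ - (Aᵀ * A)⁻¹‖
      ≤ ‖(Bᵀ * B)⁻¹‖ * ‖(A - B)ᵀ‖ * ‖A * (Aᵀ * A)⁻¹‖
        + ‖(Bᵀ * B)⁻¹ * Bᵀ‖ * ‖A - B‖ * ‖(Aᵀ * A)⁻¹‖ :=
        key ▸ (norm_add_le _ _).trans (add_le_add (l2_opNorm_mul_mul_le _ _ _)
          (l2_opNorm_mul_mul_le _ _ _))
    _ ≤ c⁻¹ * ‖A - B‖ * (√c)⁻¹ + (√c)⁻¹ * ‖A - B‖ * c⁻¹ := by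
        rw [l2_opNorm_transpose]
        gcongr
        exacts [l2_opNorm_inv_gram_le hc hB, l2_opNorm_mul_inv_gram_le hc hA,
          l2_opNorm_inv_gram_mul_transpose_le hc hB, l2_opNorm_inv_gram_le hc hA]
    _ = 2 * ‖A - B‖ / (c * √c) := by field_simp; ring

theorem l2_opNorm_pinv_sub_le (hc : 0 < c) (hA : ∀ x, c * l2sq x ≤ l2sq (A *ᵥ x))
    (hB : ∀ x, c * l2sq x ≤ l2sq (B *ᵥ x)) :
    ‖(Bᵀ * B)⁻¹ * Bᵀ - (Aᵀ * A)⁻¹ * Aᵀ‖ ≤ 2 * ‖A - B‖ / c := by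
  have hGA := isUnit_det_transpose_mul_self hc hA
  have hGB := isUnit_det_transpose_mul_self hc hB
  have key : (Bᵀ * B)⁻¹ * Bᵀ - (Aᵀ * A)⁻¹ * Aᵀ = (Bᵀ * B)⁻¹ * Bᵀ * (A - B) * ((Aᵀ * A)⁻¹ * Aᵀ)
      - (Bᵀ * B)⁻¹ * (A - B)ᵀ * (1 - A * ((Aᵀ * A)⁻¹ * Aᵀ)) := by
    simp only [transpose_sub, Matrix.sub_mul, Matrix.mul_sub, Matrix.mul_assoc, Matrix.mul_one,
      transpose_mul_mul_inv_gram_mul hGA, inv_gram_mul_cancel hGB]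
    abel
  calc ‖(Bᵀ * B)⁻¹ * Bᵀ - (Aᵀ * A)⁻¹ * Aᵀ‖
      ≤ ‖(Bᵀ * B)⁻¹ * Bᵀ‖ * ‖A - B‖ * ‖(Aᵀ * A)⁻¹ * Aᵀ‖
        + ‖(Bᵀ * B)⁻¹‖ * ‖(A - B)ᵀ‖ * ‖1 - A * ((Aᵀ * A)⁻¹ * Aᵀ)‖ :=
        key ▸ (norm_sub_le _ _).trans (add_le_add (l2_opNorm_mul_mul_le _ _ _)
          (l2_opNorm_mul_mul_le _ _ _))
    _ ≤ (√c)⁻¹ * ‖A - B‖ * (√c)⁻¹ + c⁻¹ * ‖A - B‖ * 1 := by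
        rw [l2_opNorm_transpose]
        gcongr
        exacts [l2_opNorm_inv_gram_mul_transpose_le hc hB,
          l2_opNorm_inv_gram_mul_transpose_le hc hA, l2_opNorm_inv_gram_le hc hB,
          l2_opNorm_one_sub_proj_le hGA]
    _ = 2 * ‖A - B‖ / c := by
        rw [mul_right_comm (√c)⁻¹, ← mul_inv, Real.mul_self_sqrt hc.le]; ring

theorem l2_opNorm_proj_sub_le (hc : 0 < c) (hA : ∀ x, c * l2sq x ≤ l2sq (A *ᵥ x))
    (hB : ∀ x, c * l2sq x ≤ l2sq (B *ᵥ x)) :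
    ‖B * ((Bᵀ * B)⁻¹ * Bᵀ) - A * ((Aᵀ * A)⁻¹ * Aᵀ)‖ ≤ 2 * ‖A - B‖ / √c := by
  have hGA := isUnit_det_transpose_mul_self hc hA
  have hGB := isUnit_det_transpose_mul_self hc hB
  have key : B * ((Bᵀ * B)⁻¹ * Bᵀ) - A * ((Aᵀ * A)⁻¹ * Aᵀ)
      = (1 - A * ((Aᵀ * A)⁻¹ * Aᵀ)) * (B - A) * ((Bᵀ * B)⁻¹ * Bᵀ)
        - A * (Aᵀ * A)⁻¹ * (A - B)ᵀ * (1 - B * ((Bᵀ * B)⁻¹ * Bᵀ)) := by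
    simp only [transpose_sub, Matrix.sub_mul, Matrix.mul_sub, Matrix.mul_assoc, Matrix.mul_one,
      Matrix.one_mul, inv_gram_mul_cancel hGA, transpose_mul_mul_inv_gram_mul hGB]
    abel
  calc ‖B * ((Bᵀ * B)⁻¹ * Bᵀ) - A * ((Aᵀ * A)⁻¹ * Aᵀ)‖
      ≤ ‖1 - A * ((Aᵀ * A)⁻¹ * Aᵀ)‖ * ‖B - A‖ * ‖(Bᵀ * B)⁻¹ * Bᵀ‖
        + ‖A * (Aᵀ * A)⁻¹‖ * ‖(A - B)ᵀ‖ * ‖1 - B * ((Bᵀ * B)⁻¹ * Bᵀ)‖ :=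
        key ▸ (norm_sub_le _ _).trans (add_le_add (l2_opNorm_mul_mul_le _ _ _)
          (l2_opNorm_mul_mul_le _ _ _))
    _ ≤ 1 * ‖A - B‖ * (√c)⁻¹ + (√c)⁻¹ * ‖A - B‖ * 1 := by
        rw [l2_opNorm_transpose, norm_sub_rev B]
        gcongr
        exacts [l2_opNorm_one_sub_proj_le hGA,
          l2_opNorm_inv_gram_mul_transpose_le hc hB, l2_opNorm_mul_inv_gram_le hc hA,
          l2_opNorm_one_sub_proj_le hGB]
    _ = 2 * ‖A - B‖ / √c := by field_simp; ring

end Perturbation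

/-- Lemma (Lipschitz bounds under RIP): perturbation bounds for I − D_J⁺D'_J, Θ_J, D_J⁺ and P_J. -/
theorem stmt6 {m p k : ℕ} (δ : ℝ) (hδ : δ < 1)
    (D D' : Matrix (Fin m) (Fin p) ℝ)
    (hD : deltaLow k D ≤ δ) (hD' : deltaLow k D' ≤ δ)
    (J : Finset (Fin p)) (hJ : J.card = k) :
    spec ((1 : Matrix J J ℝ) - pinv D J * colsub D' J)
        ≤ frob (D - D') / Real.sqrt (1 - δ) ∧
    spec (theta D' J - theta D J)
        ≤ 2 * frob (D - D') / ((1 - δ) * Real.sqrt (1 - δ)) ∧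
    spec (pinv D' J - pinv D J) ≤ 2 * frob (D - D') / (1 - δ) ∧
    spec (proj D' J - proj D J) ≤ 2 * frob (D - D') / Real.sqrt (1 - δ) := by
  have hc : 0 < 1 - δ := sub_pos.2 hδ
  have hA := one_sub_mul_l2sq_le_l2sq_colsub_mulVec hD hJ
  have hB := one_sub_mul_l2sq_le_l2sq_colsub_mulVec hD' hJ
  have hdiff : ‖colsub D J - colsub D' J‖ ≤ frob (D - D') :=
    (l2_opNorm_le_frob _).trans (frob_colsub_le (D - D') J)
  simp only [spec_eq_l2_opNorm]
  refine ⟨?_, ?_, ?_, ?_⟩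
  · exact (l2_opNorm_one_sub_pinv_mul_le hc hA).trans (by gcongr)
  · exact (l2_opNorm_inv_gram_sub_le hc hA hB).trans (by gcongr)
  · exact (l2_opNorm_pinv_sub_le hc hA hB).trans (by gcongr)
  · exact (l2_opNorm_proj_sub_le hc hA hB).trans (by gcongr)
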